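/- arXiv:1605.00559 — 4 statements merged into one kernel-verified Lean document; each statement's English description precedes it below -/
import Mathlib

section
/- Let λ, μ > 0, p ∈ (0,1], and let p̃, t̃, s̃ be real numbers such that λp̃² + (μ−λ)p̃ = μp, μ − λ + 2λp̃ > 0, and μ − λ + λp̃ > 0. Suppose that p̃t̃ = (μ/(λ+μ))·p·(1/(λ+μ)) + (λ/(λ+μ))·[ p̃·(1/(λ+μ) + t̃) + (1−p̃)·p̃·(1/(λ+μ) + s̃ + t̃) ] and (1−p̃)s̃ = (μ(1−p)/(λ+μ))·(1/(λ+μ)) + (λ/(λ+μ))·(1−p̃)²·(1/(λ+μ) + 2s̃). Then (1−p̃)s̃ = (1−p̃)/(μ − λ + 2λp̃) and p̃t̃ = [ p̃ + (μ/(μ−λ+2λp̃))·(p̃ − p) ] / (μ − λ + λp̃). -/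
/-!
Multiplying the renewal equation for `s̃` by `(λ+μ)²` makes it linear in `s̃` with coefficient
`(1-p̃)(λ+μ)(μ-λ+2λp̃)`, and the quadratic relation `λp̃² + (μ-λ)p̃ = μp` turns its constant term
`μ(1-p) + λ(1-p̃)²` into `(λ+μ)(1-p̃)`. Substituting `(1-p̃)s̃` into the equation for `t̃` leaves
an equation linear in `p̃t̃` with coefficient `(λ+μ)(μ-λ+λp̃)`, solved in the same way.
-/

section RenewalEquations

variable {K : Type*} [Field K] {lam mu p pt tt st : K}

theorem stilde_renewal_solution (hD : lam + mu ≠ 0)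
    (hquad : lam * pt ^ 2 + (mu - lam) * pt = mu * p)
    (hst : (1 - pt) * st
      = mu * (1 - p) / (lam + mu) * (1 / (lam + mu))
        + lam / (lam + mu) * (1 - pt) ^ 2 * (1 / (lam + mu) + 2 * st)) :
    (1 - pt) * st * (mu - lam + 2 * lam * pt) = 1 - pt := by
  field_simp at hst
  refine mul_right_cancel₀ hD ?_
  linear_combination hst + hquad

theorem ttilde_renewal_solution (hD : lam + mu ≠ 0)
    (hquad : lam * pt ^ 2 + (mu - lam) * pt = mu * p)
    (hs : (1 - pt) * st * (mu - lam + 2 * lam * pt) = 1 - pt)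
    (htt : pt * tt
      = mu / (lam + mu) * p * (1 / (lam + mu))
        + lam / (lam + mu) * (pt * (1 / (lam + mu) + tt)
            + (1 - pt) * pt * (1 / (lam + mu) + st + tt))) :
    pt * tt * (mu - lam + lam * pt) * (mu - lam + 2 * lam * pt)
      = pt * (mu - lam + 2 * lam * pt) + mu * (pt - p) := by
  field_simp at htt
  refine mul_right_cancel₀ hD ?_
  linear_combination (mu - lam + 2 * lam * pt) * htt + lam * (lam + mu) * pt * hs
    - (mu - lam + 2 * lam * pt + lam + mu) * hquad

end RenewalEquations

theorem lcfs_preemptive_ttilde_stilde_general (lam mu p pt tt st : ℝ)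
    (hlam : 0 < lam) (hmu : 0 < mu)
    (hquad : lam * pt ^ 2 + (mu - lam) * pt = mu * p)
    (hd1 : 0 < mu - lam + 2 * lam * pt)
    (hd2 : 0 < mu - lam + lam * pt)
    (htt : pt * tt
      = mu / (lam + mu) * p * (1 / (lam + mu))
        + lam / (lam + mu) * (pt * (1 / (lam + mu) + tt)
            + (1 - pt) * pt * (1 / (lam + mu) + st + tt)))
    (hst : (1 - pt) * st
      = mu * (1 - p) / (lam + mu) * (1 / (lam + mu))
        + lam / (lam + mu) * (1 - pt) ^ 2 * (1 / (lam + mu) + 2 * st)) :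
    (1 - pt) * st = (1 - pt) / (mu - lam + 2 * lam * pt) ∧
    pt * tt = (pt + mu / (mu - lam + 2 * lam * pt) * (pt - p)) / (mu - lam + lam * pt) := by
  have hD : lam + mu ≠ 0 := by positivity
  have hs := stilde_renewal_solution hD hquad hst
  have ht := ttilde_renewal_solution hD hquad hs htt
  refine ⟨(eq_div_iff hd1.ne').mpr hs, ?_⟩
  rw [eq_div_iff hd2.ne', div_mul_eq_mul_div, add_div' _ _ _ hd1.ne', eq_div_iff hd1.ne']
  exact ht

/-- Solving the renewal equations for `p̃ t̃` and `(1−p̃) s̃` in the LCFS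
preemptive-priority M/M/1 queue with delivery errors. -/
theorem lcfs_preemptive_ttilde_stilde (lam mu p pt tt st : ℝ)
    (hlam : 0 < lam) (hmu : 0 < mu) (hp : p ∈ Set.Ioc (0 : ℝ) 1)
    (hquad : lam * pt ^ 2 + (mu - lam) * pt = mu * p)
    (hd1 : 0 < mu - lam + 2 * lam * pt)
    (hd2 : 0 < mu - lam + lam * pt)
    (htt : pt * tt
      = mu / (lam + mu) * p * (1 / (lam + mu))
        + lam / (lam + mu) * (pt * (1 / (lam + mu) + tt)
            + (1 - pt) * pt * (1 / (lam + mu) + st + tt)))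
    (hst : (1 - pt) * st
      = mu * (1 - p) / (lam + mu) * (1 / (lam + mu))
        + lam / (lam + mu) * (1 - pt) ^ 2 * (1 / (lam + mu) + 2 * st)) :
    (1 - pt) * st = (1 - pt) / (mu - lam + 2 * lam * pt) ∧
    pt * tt = (pt + mu / (mu - lam + 2 * lam * pt) * (pt - p)) / (mu - lam + lam * pt) :=
  lcfs_preemptive_ttilde_stilde_general lam mu p pt tt st hlam hmu hquad hd1 hd2 htt hst
end

section
/- Let λ, μ > 0, p ∈ (0,1], and let p̃ be a real number with λp̃² + (μ−λ)p̃ = μp, 0 < p̃ ≤ 1, and μ − λ + 2λp̃ > 0; set s̃ := 1/(μ − λ + 2λp̃). Suppose P > 0 and E are real numbers satisfying P = (μ/(λ+μ))·p + (λ/(λ+μ))·(1−p̃)·P and P·E = (μ/(λ+μ))·p·(1/(λ+μ)) + (λ/(λ+μ))·(1−p̃)·P·(1/(λ+μ) + s̃ + E). Then P = μp/(μ + λp̃) and E = 1/(μ − λ + 2λp̃). -/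
/-!
Both claims are linear algebra in the unknowns once the denominators are cleared. The first
balance equation says `P (μ + λ p̃) = μ p`. Substituting this into the second one, the terms in
`P E` collapse to `μ p (λ + μ) E`, and since `s̃ (μ - λ + 2 λ p̃) = 1` the remaining terms reduce,
after dividing by `μ p ≠ 0`, to `E (μ - λ + 2 λ p̃) = 1`.
-/

section InformativePacket

variable {K : Type*} [Field K] {lam mu p pt P E st : K}

theorem informative_prob_mul_eq (hsum : lam + mu ≠ 0)
    (hPeq : P = mu / (lam + mu) * p + lam / (lam + mu) * (1 - pt) * P) :
    P * (mu + lam * pt) = mu * p := by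
  field_simp at hPeq
  linear_combination hPeq

theorem informative_time_balance (hsum : lam + mu ≠ 0) (hP : P * (mu + lam * pt) = mu * p)
    (hPE : P * E = mu / (lam + mu) * p * (1 / (lam + mu))
        + lam / (lam + mu) * (1 - pt) * P * (1 / (lam + mu) + st + E)) :
    mu * p * ((lam + mu) * E - 1) = lam * (1 - pt) * P * (1 + (lam + mu) * st) := by
  field_simp at hPE
  linear_combination hPE - (lam + mu) * E * hP

theorem informative_time_eq (hsum : lam + mu ≠ 0) (hmp : mu * p ≠ 0)
    (hd : mu - lam + 2 * lam * pt ≠ 0) (hP : P * (mu + lam * pt) = mu * p)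
    (hbal : mu * p * ((lam + mu) * E - 1)
      = lam * (1 - pt) * P * (1 + (lam + mu) * (1 / (mu - lam + 2 * lam * pt)))) :
    E = 1 / (mu - lam + 2 * lam * pt) := by
  -- `d + λ + μ = 2 (μ + λ p̃)` for `d = μ - λ + 2 λ p̃`, so `hP` eliminates `P`.
  have hinv : 1 / (mu - lam + 2 * lam * pt) * (mu - lam + 2 * lam * pt) = 1 := one_div_mul_cancel hd
  have hmul : mu * p * ((lam + mu) * ((mu - lam + 2 * lam * pt) * E - 1)) = 0 := by
    linear_combination (mu - lam + 2 * lam * pt) * hbal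
      + lam * (1 - pt) * P * (lam + mu) * hinv + 2 * lam * (1 - pt) * hP
  have hE : (mu - lam + 2 * lam * pt) * E = 1 := by
    simpa only [mul_eq_zero, hmp, hsum, sub_eq_zero, false_or] using hmul
  exact eq_one_div_of_mul_eq_one_right hE

end InformativePacket

theorem lcfs_preemptive_informative_general (lam mu p pt P E : ℝ)
    (hlam : 0 < lam) (hmu : 0 < mu) (hp : p ∈ Set.Ioc (0 : ℝ) 1)
    (hd : 0 < mu - lam + 2 * lam * pt)
    (st : ℝ) (hst : st = 1 / (mu - lam + 2 * lam * pt))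
    (hPeq : P = mu / (lam + mu) * p + lam / (lam + mu) * (1 - pt) * P)
    (hPE : P * E = mu / (lam + mu) * p * (1 / (lam + mu))
        + lam / (lam + mu) * (1 - pt) * P * (1 / (lam + mu) + st + E)) :
    P = mu * p / (mu + lam * pt) ∧ E = 1 / (mu - lam + 2 * lam * pt) := by
  have hsum : lam + mu ≠ 0 := (add_pos hlam hmu).ne'
  have hmp : mu * p ≠ 0 := (mul_pos hmu hp.1).ne'
  have hP := informative_prob_mul_eq hsum hPeq
  have hden : mu + lam * pt ≠ 0 := right_ne_zero_of_mul (hP ▸ hmp)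
  have hbal := informative_time_balance hsum hP hPE
  subst hst
  exact ⟨eq_div_of_mul_eq hden hP, informative_time_eq hsum hmp hd.ne' hP hbal⟩

/-- Probability that a packet is informative and its conditional expected service time,
in the LCFS preemptive-priority M/M/1 queue with delivery errors. -/
theorem lcfs_preemptive_informative (lam mu p pt P E : ℝ)
    (hlam : 0 < lam) (hmu : 0 < mu) (hp : p ∈ Set.Ioc (0 : ℝ) 1)
    (hquad : lam * pt ^ 2 + (mu - lam) * pt = mu * p)
    (hpt01 : 0 < pt ∧ pt ≤ 1)
    (hd : 0 < mu - lam + 2 * lam * pt)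
    (st : ℝ) (hst : st = 1 / (mu - lam + 2 * lam * pt))
    (hP : 0 < P)
    (hPeq : P = mu / (lam + mu) * p + lam / (lam + mu) * (1 - pt) * P)
    (hPE : P * E = mu / (lam + mu) * p * (1 / (lam + mu))
        + lam / (lam + mu) * (1 - pt) * P * (1 / (lam + mu) + st + E)) :
    P = mu * p / (mu + lam * pt) ∧ E = 1 / (mu - lam + 2 * lam * pt) :=
  lcfs_preemptive_informative_general lam mu p pt P E hlam hmu hp hd st hst hPeq hPE
end

section
/- Let λ, μ > 0, p ∈ (0,1], and let p̃ ∈ [0,1) satisfy λ(1−p)p̃² + (μ−λ+2λp)p̃ = λp, and assume λ + μ − 2λ(1−p)(1−p̃) ≠ 0. Set r := λ(1−p)(1−p̃)/(λ+μ), so 0 ≤ r < 1. If s̃ is a real number satisfying (1−p̃)·s̃ = Σ_{k=0}^∞ (μ/(λ+μ)) · r^k · ( (k+1)/(λ+μ) + k·s̃ ), then s̃ = 1 / ( λ + μ − 2λ(1−p)(1−p̃) ). -/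
/-!
Writing `a = λ(1-p)(1-p̃)` and `r = a/(λ+μ)`, the series is an arithmetico-geometric one and sums to
`μ (1 + a s̃) / (λ+μ-a)²`, so the renewal equation becomes `(1-p̃) s̃ (λ+μ-a)² = μ (1 + a s̃)`.
The quadratic equation satisfied by `p̃` is exactly `(1-p̃)(λ+μ-a)² - μ a = μ (λ+μ-2a)`,
which turns this into `μ (λ+μ-2a) s̃ = μ`.
-/

theorem hasSum_mul_geometric_mul_succ_div_add_mul {𝕜 : Type*} [NormedField 𝕜] [CompleteSpace 𝕜]
    {r : 𝕜} (hr : ‖r‖ < 1) (c m s : 𝕜) :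
    HasSum (fun k : ℕ => c * r ^ k * (((k : 𝕜) + 1) / m + k * s))
      (c * (1 / m + r * s) / (1 - r) ^ 2) := by
  have h1r : 1 - r ≠ 0 := sub_ne_zero.2 fun h => by simp [← h] at hr
  have hk := hasSum_coe_mul_geometric_of_norm_lt_one hr
  have hgeo := hasSum_geometric_of_norm_lt_one hr
  have hsucc : r / (1 - r) ^ 2 + (1 - r)⁻¹ = 1 / (1 - r) ^ 2 := by
    field_simp
    ring
  have hsum := ((hk.add hgeo).mul_left (c / m)).add (hk.mul_left (c * s))
  rw [hsucc] at hsum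
  rw [show c * (1 / m + r * s) / (1 - r) ^ 2
      = c / m * (1 / (1 - r) ^ 2) + c * s * (r / (1 - r) ^ 2) by ring]
  exact hsum.congr_fun fun k => by ring

theorem mul_sq_sub_eq_of_eq_div_one_sub_div_sq {𝕜 : Type*} [Field 𝕜] {M a c q s : 𝕜}
    (hM : M ≠ 0) (hMa : M - a ≠ 0)
    (h : q * s = c / M * (1 / M + a / M * s) / (1 - a / M) ^ 2) :
    q * s * (M - a) ^ 2 = c * (1 + a * s) := by
  rw [h, one_sub_div hM]
  field_simp

theorem lcfs_nonpreemptive_stilde_general (lam mu p pt : ℝ)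
    (hlam : 0 < lam) (hmu : 0 < mu)
    (hquad : lam * (1 - p) * pt ^ 2 + (mu - lam + 2 * lam * p) * pt = lam * p)
    (hD : lam + mu - 2 * lam * (1 - p) * (1 - pt) ≠ 0)
    (r : ℝ) (hr : r = lam * (1 - p) * (1 - pt) / (lam + mu))
    (hr01 : 0 ≤ r ∧ r < 1)
    (st : ℝ)
    (hst : (1 - pt) * st
      = ∑' k : ℕ, mu / (lam + mu) * r ^ k * (((k : ℝ) + 1) / (lam + mu) + (k : ℝ) * st)) :
    st = 1 / (lam + mu - 2 * lam * (1 - p) * (1 - pt)) := by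
  set a := lam * (1 - p) * (1 - pt)
  have hM : 0 < lam + mu := add_pos hlam hmu
  have hr_norm : ‖r‖ < 1 := by rw [Real.norm_of_nonneg hr01.1]; exact hr01.2
  have hMa : lam + mu - a ≠ 0 := by
    have : a < lam + mu := by rw [← div_lt_one hM, ← hr]; exact hr01.2
    linarith
  rw [(hasSum_mul_geometric_mul_succ_div_add_mul hr_norm _ _ _).tsum_eq, hr] at hst
  have hrenewal := mul_sq_sub_eq_of_eq_div_one_sub_div_sq hM.ne' hMa hst
  have hquad' : (1 - pt) * (lam + mu - a) ^ 2 - mu * a = mu * (lam + mu - 2 * a) := by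
    linear_combination (-(lam + mu - a)) * hquad
  rw [eq_div_iff hD]
  exact mul_left_cancel₀ hmu.ne' (by linear_combination hrenewal - st * hquad')

/-- Solving the renewal series equation for `s̃ = E{S̄_n | Ẑ_n > S̄_n}` in the LCFS
non-preemptive-priority M/M/1 queue with delivery errors. -/
theorem lcfs_nonpreemptive_stilde (lam mu p pt : ℝ)
    (hlam : 0 < lam) (hmu : 0 < mu) (hp : p ∈ Set.Ioc (0 : ℝ) 1)
    (hpt : pt ∈ Set.Ico (0 : ℝ) 1)
    (hquad : lam * (1 - p) * pt ^ 2 + (mu - lam + 2 * lam * p) * pt = lam * p)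
    (hD : lam + mu - 2 * lam * (1 - p) * (1 - pt) ≠ 0)
    (r : ℝ) (hr : r = lam * (1 - p) * (1 - pt) / (lam + mu))
    (hr01 : 0 ≤ r ∧ r < 1)
    (st : ℝ)
    (hst : (1 - pt) * st
      = ∑' k : ℕ, mu / (lam + mu) * r ^ k * (((k : ℝ) + 1) / (lam + mu) + (k : ℝ) * st)) :
    st = 1 / (lam + mu - 2 * lam * (1 - p) * (1 - pt)) :=
  lcfs_nonpreemptive_stilde_general lam mu p pt hlam hmu hquad hD r hr hr01 st hst
end

section
/- Let λ, μ > 0, p ∈ (0,1], and let p̃ ∈ (0,1) satisfy λ(1−p)p̃² + (μ−λ+2λp)p̃ = λp, with D := λ + μ − 2λ(1−p)(1−p̃) > 0 and λ + μp − λ(1−p)(1−p̃) ≠ 0. Define s̃ := 1/D, T := [ λp + 2λp² + (λ − 2λp² − μ + μp)p̃ ] / (μpD), and τ := [ (λ+μ)p + (λ+μ)p² + (λ + (μ−λ)p² − μ)·p̃ ] / (μpD). If z₁ is a real number satisfying z₁ = (μ/(λ+μ))·[ 1/(λ+μ) + 1/λ + p/μ + (1−p)·z₁ ] + (λ/(λ+μ))·[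 1/(λ+μ) + T + (1−p̃)p·(s̃ + 1/μ) + (1−p̃)(1−p)·(s̃ + z₁) ], then z₁ = ( μ + λ + λp + λ²τ ) / ( λ·( λ + μp − λ(1−p)(1−p̃) ) ). -/
/-- Solving the equation for `z₁ = E{Ẑ_n | π(u(n)) = 1}` in the LCFS
non-preemptive-priority M/M/1 queue with delivery errors. -/
theorem lcfs_nonpreemptive_z1 (lam mu p pt : ℝ)
    (hlam : 0 < lam) (hmu : 0 < mu) (hp : p ∈ Set.Ioc (0 : ℝ) 1)
    (hpt : pt ∈ Set.Ioo (0 : ℝ) 1)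
    (hquad : lam * (1 - p) * pt ^ 2 + (mu - lam + 2 * lam * p) * pt = lam * p)
    (D : ℝ) (hD : D = lam + mu - 2 * lam * (1 - p) * (1 - pt)) (hDpos : 0 < D)
    (hden : lam + mu * p - lam * (1 - p) * (1 - pt) ≠ 0)
    (st T tau : ℝ)
    (hst : st = 1 / D)
    (hT : T = (lam * p + 2 * lam * p ^ 2 + (lam - 2 * lam * p ^ 2 - mu + mu * p) * pt)
                / (mu * p * D))
    (htau : tau = ((lam + mu) * p + (lam + mu) * p ^ 2
                    + (lam + (mu - lam) * p ^ 2 - mu) * pt) / (mu * p * D))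
    (z1 : ℝ)
    (hz1 : z1 = mu / (lam + mu) * (1 / (lam + mu) + 1 / lam + p / mu + (1 - p) * z1)
        + lam / (lam + mu) * (1 / (lam + mu) + T + (1 - pt) * p * (st + 1 / mu)
            + (1 - pt) * (1 - p) * (st + z1))) :
    z1 = (mu + lam + lam * p + lam ^ 2 * tau)
          / (lam * (lam + mu * p - lam * (1 - p) * (1 - pt))) := by
  have hp0 : p ≠ 0 := hp.1.ne'
  have hD0 : D ≠ 0 := hDpos.ne'
  have hmpD : mu * p * D ≠ 0 := by positivity
  have hlm : lam + mu ≠ 0 := by positivity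
  have hl : lam ≠ 0 := hlam.ne'
  have hm : mu ≠ 0 := hmu.ne'
  have key1 : tau * (mu * p * D) = T * (mu * p * D) + p ^ 2 * D * (1 - pt)
      + mu * p * (1 - pt) := by
    rw [htau, hT, div_mul_cancel₀ _ hmpD, div_mul_cancel₀ _ hmpD]
    linear_combination 2 * p ^ 2 * hquad + (-(p ^ 2 * (1 - pt))) * hD
  have hDD : D * (1 / D) = 1 := mul_one_div_cancel hD0
  have hM : mu * (1 / mu) = 1 := mul_one_div_cancel hm
  have key2 : tau = T + (1 - pt) * p * (1 / mu) + (1 - pt) * (1 / D) := by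
    refine mul_right_cancel₀ hmpD ?_
    linear_combination key1 - ((1 - pt) * p ^ 2 * D) * hM - ((1 - pt) * mu * p) * hDD
  rw [hst] at hz1
  have hE : (lam + mu) * (1 / (lam + mu)) = 1 := mul_one_div_cancel hlm
  have hL : lam * (1 / lam) = 1 := mul_one_div_cancel hl
  rw [eq_div_iff (mul_ne_zero hl hden)]
  linear_combination (lam * (lam + mu)) * hz1
    + (lam * mu * (1 / (lam + mu) + 1 / lam + p * (1 / mu) + (1 - p) * z1)
       + lam ^ 2 * (1 / (lam + mu) + T + (1 - pt) * p * (1 / D + 1 / mu)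
            + (1 - pt) * (1 - p) * (1 / D + z1))
       + lam) * hE
    + mu * hL + (lam * p) * hM + (-(lam ^ 2)) * key2
end
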